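/- Let F : ℝ^d → ℝ, let x* ∈ ℝ^d, let N ⊂ ℝ^d, let β ∈ (1,2) and μ > 0 satisfy the Łojasiewicz condition μ·|F(x) − F(x*)| ≤ ‖∇F(x)‖^β for all x ∈ N. Let λ ∈ (0,1) and h₋ > 0, and let (Xⁿ)ₙ be a sequence in N with F(Xⁿ) ≥ F(x*) for all n and satisfying the descent inequality F(X^{n+1}) ≤ F(Xⁿ) − λh₋·‖∇F(Xⁿ)‖² for all n. Then there exists a constant C > 0 (depending on β, μ, λ, h₋, and F(X⁰) − F(x*)) such that F(Xⁿ) − F(x*) ≤ C·n^{−β/(2−β)} for all n ≥ 1. -/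

import Mathlib

/-- Key Bernoulli-type inequality: for `0 < α < 1` and `0 ≤ t < 1`,
`1 + α*t ≤ (1 - t)^(-α)`. -/
lemma aux_bernoulli {α t : ℝ} (hα0 : 0 < α) (hα1 : α < 1) (ht0 : 0 ≤ t) (ht1 : t < 1) :
    1 + α * t ≤ (1 - t) ^ (-α) := by
  have h1t : (0:ℝ) < 1 - t := by linarith
  have hαt : α * t < 1 := by nlinarith
  have hb : (1 - t) ^ α ≤ 1 - α * t := by
    have h := rpow_one_add_le_one_add_mul_self (s := -t) (by linarith) hα0.le hα1.le
    rw [show (1:ℝ) + -t = 1 - t by ring] at h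
    linarith
  have hpos : (0:ℝ) < (1 - t) ^ α := Real.rpow_pos_of_pos h1t α
  rw [Real.rpow_neg h1t.le, le_inv_comm₀ (by positivity) hpos]
  calc (1 - t) ^ α ≤ 1 - α * t := hb
    _ ≤ (1 + α * t)⁻¹ := by
        rw [inv_eq_one_div, le_div_iff₀ (by positivity)]
        nlinarith [sq_nonneg (α * t)]

/-- Algebraic convergence rate under the Łojasiewicz condition with exponent
`β ∈ (1,2)`: if `μ·|F(x) − F(x*)| ≤ ‖∇F(x)‖^β` on `N` and the SBGD minimizer
sequence satisfies the descent inequality with step `λh₋`, then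
`F(Xⁿ) − F(x*) ≤ C·n^{−β/(2−β)}` for all `n ≥ 1`. -/
theorem sbgd_algebraic_rate_Lojasiewicz {d : ℕ} (F : EuclideanSpace ℝ (Fin d) → ℝ)
    (xstar : EuclideanSpace ℝ (Fin d)) (N : Set (EuclideanSpace ℝ (Fin d)))
    (β μ : ℝ) (hβ1 : 1 < β) (hβ2 : β < 2) (hμ : 0 < μ)
    (hLoj : ∀ x ∈ N, μ * |F x - F xstar| ≤ ‖gradient F x‖ ^ β)
    (lam hminus : ℝ) (hlam0 : 0 < lam) (hlam1 : lam < 1) (hh : 0 < hminus)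
    (X : ℕ → EuclideanSpace ℝ (Fin d)) (hXN : ∀ n, X n ∈ N)
    (hXlb : ∀ n, F xstar ≤ F (X n))
    (hdescent : ∀ n, F (X (n + 1)) ≤ F (X n) - lam * hminus * ‖gradient F (X n)‖ ^ 2) :
    ∃ C > 0, ∀ n : ℕ, 1 ≤ n →
      F (X n) - F xstar ≤ C * (n : ℝ) ^ (-(β / (2 - β))) := by
  have hβ0 : (0:ℝ) < β := by linarith
  set a : ℕ → ℝ := fun n => F (X n) - F xstar with ha_def
  have ha : ∀ n, 0 ≤ a n := fun n => sub_nonneg.2 (hXlb n)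
  set p : ℝ := 2 / β with hp_def
  have hp1 : 1 < p := (one_lt_div hβ0).2 hβ2
  have hp2 : p < 2 := by rw [hp_def, div_lt_iff₀ hβ0]; nlinarith
  set α : ℝ := p - 1 with hα_def
  have hα0 : 0 < α := by simp only [hα_def]; linarith
  have hα1 : α < 1 := by simp only [hα_def]; linarith
  set c : ℝ := lam * hminus * μ ^ p with hc_def
  have hc0 : 0 < c := by
    have : (0:ℝ) < μ ^ p := Real.rpow_pos_of_pos hμ p
    positivity
  -- descent recursion for a
  have hrec : ∀ n, a (n + 1) ≤ a n - c * a n ^ p := by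
    intro n
    have hg : μ * a n ≤ ‖gradient F (X n)‖ ^ β := by
      have := hLoj (X n) (hXN n)
      rwa [abs_of_nonneg (ha n)] at this
    have hgsq : (μ * a n) ^ p ≤ ‖gradient F (X n)‖ ^ 2 := by
      have h1 : ((μ * a n) ^ p : ℝ) ≤ (‖gradient F (X n)‖ ^ β) ^ p :=
        Real.rpow_le_rpow (mul_nonneg hμ.le (ha n)) hg (by positivity)
      have h2 : (‖gradient F (X n)‖ ^ β) ^ p = ‖gradient F (X n)‖ ^ 2 := by
        rw [← Real.rpow_natCast ‖gradient F (X n)‖ 2, ← Real.rpow_mul (norm_nonneg _)]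
        congr 1
        push_cast
        rw [hp_def]; field_simp
      linarith [h1, h2.le]
    have hmul : (μ * a n) ^ p = μ ^ p * a n ^ p := Real.mul_rpow hμ.le (ha n)
    have := hdescent n
    simp only [ha_def]
    have hfin : c * a n ^ p ≤ lam * hminus * ‖gradient F (X n)‖ ^ 2 := by
      rw [hc_def, mul_assoc, ← hmul]
      have := mul_le_mul_of_nonneg_left hgsq (by positivity : (0:ℝ) ≤ lam * hminus)
      linarith
    have hd : F (X (n+1)) - F xstar ≤ (F (X n) - F xstar) - lam * hminus * ‖gradient F (X n)‖ ^ 2 := by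
      linarith [hdescent n]
    calc F (X (n+1)) - F xstar ≤ (F (X n) - F xstar) - lam * hminus * ‖gradient F (X n)‖ ^ 2 := hd
      _ ≤ (F (X n) - F xstar) - c * a n ^ p := by linarith
  -- key induction
  have key : ∀ n : ℕ, a n = 0 ∨ c * α * n ≤ (a n) ^ (-α) := by
    intro n
    induction n with
    | zero =>
      rcases eq_or_lt_of_le (ha 0) with h | h
      · exact Or.inl h.symm
      · exact Or.inr (by simpa using (Real.rpow_pos_of_pos h (-α)).le)
    | succ n ih =>
      rcases eq_or_lt_of_le (ha (n+1)) with h | h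
      · exact Or.inl h.symm
      · refine Or.inr ?_
        -- a (n+1) > 0, hence a n > 0
        have hxpos : 0 < a n := by
          rcases eq_or_lt_of_le (ha n) with h0 | h0
          · exfalso
            have := hrec n
            rw [← h0] at this
            simp [Real.zero_rpow (by positivity : p ≠ 0)] at this
            linarith
          · exact h0
        have ihx : c * α * n ≤ (a n) ^ (-α) := by
          rcases ih with h0 | h0
          · exact absurd h0 (ne_of_gt hxpos)
          · exact h0
        set x := a n with hx_def
        set t : ℝ := c * x ^ α with ht_def
        have ht0 : 0 ≤ t := by
          have : (0:ℝ) < x ^ α := Real.rpow_pos_of_pos hxpos α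
          positivity
        have hxp : x ^ p = x * x ^ α := by
          rw [← Real.rpow_one_add' hxpos.le (by positivity)]
          congr 1
          simp [hα_def]
        have hstep : a (n+1) ≤ x * (1 - t) := by
          have := hrec n
          rw [hxp] at this
          calc a (n+1) ≤ x - c * (x * x ^ α) := this
            _ = x * (1 - t) := by ring
        have ht1 : t < 1 := by
          by_contra hcon
          push_neg at hcon
          have : x * (1 - t) ≤ 0 := mul_nonpos_of_nonneg_of_nonpos hxpos.le (by linarith)
          linarith
        -- a(n+1)^(-α) ≥ (x(1-t))^(-α) = x^(-α) (1-t)^(-α) ≥ x^(-α)(1 + αt)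
        have h1t : (0:ℝ) < 1 - t := by linarith
        have hxt : (0:ℝ) < x * (1 - t) := by positivity
        have hmono : (x * (1 - t)) ^ (-α) ≤ (a (n+1)) ^ (-α) :=
          Real.rpow_le_rpow_of_nonpos h hstep (by linarith)
        have heq : (x * (1 - t)) ^ (-α) = x ^ (-α) * (1 - t) ^ (-α) :=
          Real.mul_rpow hxpos.le h1t.le
        have hbern : 1 + α * t ≤ (1 - t) ^ (-α) := aux_bernoulli hα0 hα1 ht0 ht1
        have hxna : (0:ℝ) < x ^ (-α) := Real.rpow_pos_of_pos hxpos _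
        have h2 : x ^ (-α) * (1 + α * t) ≤ x ^ (-α) * (1 - t) ^ (-α) :=
          mul_le_mul_of_nonneg_left hbern hxna.le
        have h3 : x ^ (-α) * t = c := by
          rw [ht_def, ← mul_assoc, mul_comm (x ^ (-α)) c, mul_assoc,
            ← Real.rpow_add hxpos]
          simp
        have h4 : x ^ (-α) + c * α ≤ (a (n+1)) ^ (-α) := by
          have : x ^ (-α) * (1 + α * t) = x ^ (-α) + α * (x ^ (-α) * t) := by ring
          rw [this, h3] at h2
          calc x ^ (-α) + c * α = x ^ (-α) + α * c := by ring
            _ ≤ x ^ (-α) * (1 - t) ^ (-α) := h2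
            _ = (x * (1 - t)) ^ (-α) := heq.symm
            _ ≤ (a (n+1)) ^ (-α) := hmono
        calc c * α * (↑(n+1) : ℝ) = c * α * n + c * α := by push_cast; ring
          _ ≤ x ^ (-α) + c * α := by linarith
          _ ≤ (a (n+1)) ^ (-α) := h4
  -- conclude
  have hcα : (0:ℝ) < c * α := by positivity
  refine ⟨(c * α) ^ (-(1/α)), Real.rpow_pos_of_pos hcα _, ?_⟩
  intro n hn
  have hne : -(β / (2 - β)) = -(1/α) := by
    have h2β : (0:ℝ) < 2 - β := by linarith
    congr 1
    rw [hα_def, hp_def, div_sub_one hβ0.ne', one_div_div]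
  have hn0 : (0:ℝ) < n := by exact_mod_cast hn
  rcases key n with h0 | h0
  · show a n ≤ _
    rw [h0]
    have : (0:ℝ) < (c * α) ^ (-(1/α)) * (n:ℝ) ^ (-(β / (2 - β))) := by
      have := Real.rpow_pos_of_pos hn0 (-(β / (2 - β)))
      have := Real.rpow_pos_of_pos hcα (-(1/α))
      positivity
    linarith
  · have hapos : 0 < a n := by
      rcases eq_or_lt_of_le (ha n) with he | he
      · exfalso
        have : c * α * n ≤ (0:ℝ) ^ (-α) := by rwa [← he] at h0
        rw [Real.zero_rpow (neg_ne_zero.mpr hα0.ne')] at this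
        nlinarith
      · exact he
    have hcαn : (0:ℝ) < c * α * n := by positivity
    have hmono2 : ((a n) ^ (-α)) ^ (-(1/α)) ≤ (c * α * n) ^ (-(1/α)) :=
      Real.rpow_le_rpow_of_nonpos hcαn h0 (by
        have : (0:ℝ) < 1/α := by positivity
        linarith)
    have hleft : ((a n) ^ (-α)) ^ (-(1/α)) = a n := by
      rw [← Real.rpow_mul hapos.le]
      have : (-α) * (-(1/α)) = 1 := by field_simp
      rw [this, Real.rpow_one]
    have hright : (c * α * n) ^ (-(1/α)) = (c * α) ^ (-(1/α)) * (n:ℝ) ^ (-(1/α)) :=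
      Real.mul_rpow hcα.le hn0.le
    show a n ≤ _
    rw [hne, ← hright, ← hleft]
    exact hmono2
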